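/- Let (T,<) be a linear order, k ≥ 1, δ₁,...,δₖ ⊆ T, O ⊆ {1,...,k}, and let F₁,...,Fₖ be as defined from δ's and O. For points a₁ ≤ d in T, the following are equivalent: (1) there exist points a₁ < a₂ < ... < aₖ ≤ d with aᵢ ∈ Fᵢ for all i; (2) there exists b ∈ [a₁, d] and a partition of [a₁, b] into nonempty consecutive order-convex intervals I₁ < ... < Iₖ with Iⱼ ⊆ δⱼ for all j and Iⱼ a singleton for each j ∈ O. -/

import Mathlib

def Until {T : Type*} [LinearOrder T] (A B : Set T) (t : T) : Prop :=
  ∃ t', t < t' ∧ t' ∈ B ∧ ∀ y, t < y → y < t' → y ∈ A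

/-- Order-convexity of a set. -/
def IsConvex {T : Type*} [LinearOrder T] (I : Set T) : Prop :=
  ∀ a ∈ I, ∀ b ∈ I, ∀ c, a ≤ c → c ≤ b → c ∈ I

/-- (P Until* Q) holds at t: some closed interval [t,t'] with t' > t splits into
nonempty convex pieces I₁ < I₂ with I₁ ⊆ P, I₂ ⊆ Q. -/
def UntilStar {T : Type*} [LinearOrder T] (P Q : Set T) (t : T) : Prop :=
  ∃ t', t < t' ∧ ∃ I₁ I₂ : Set T,
    I₁.Nonempty ∧ I₂.Nonempty ∧ IsConvex I₁ ∧ IsConvex I₂ ∧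
    I₁ ∪ I₂ = Set.Icc t t' ∧ Disjoint I₁ I₂ ∧
    (∀ a ∈ I₁, ∀ b ∈ I₂, a < b) ∧ I₁ ⊆ P ∧ I₂ ⊆ Q

/-- A partition of [a,b] into consecutive nonempty convex intervals I 0 < I 1 < … -/
def IsDecomp {T : Type*} [LinearOrder T] (a b : T) {k : ℕ} (I : Fin k → Set T) : Prop :=
  (∀ j, (I j).Nonempty) ∧ (∀ j, IsConvex (I j)) ∧
    (∀ i j : Fin k, i < j → ∀ x ∈ I i, ∀ y ∈ I j, x < y) ∧
    (⋃ j, I j) = Set.Icc a b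

/-- The defining equations of the formulas F₁,…,F_{k} from δ₁,…,δ_k and O
 (here k = n+1, indices are 0-based). `Until ∅` expresses `False Until`,
 i.e. "the successor of t exists and lies in …". -/
def DefinesF {T : Type*} [LinearOrder T] {n : ℕ} (δ F : Fin (n + 1) → Set T)
    (O : Finset (Fin (n + 1))) : Prop :=
  F (Fin.last n) = δ (Fin.last n) ∧
    ∀ i : Fin n,
      F i.castSucc = δ i.castSucc ∩ {t |
        if i.castSucc ∈ O then
          (if i.succ ∈ O then Until (∅ : Set T) (F i.succ) t
           else Until (δ i.succ) (F i.succ) t)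
        else
          (if i.succ ∈ O then Until (δ i.castSucc) (F i.succ) t
           else UntilStar (δ i.castSucc) (F i.succ) t)}

/-!
Everything rests on cutting an interval `[t, u]` into two pieces `J₁ < J₂` with `t ∈ J₁ ⊆ δ_{i-1}`
and `u ∈ J₂ ⊆ δ_i`, each piece a singleton when its index lies in `O`. For `t ∈ δ_{i-1}`, the
condition `C_i(t)` yields such a cut of some `[t, u]` with `u ∈ F_i`, and conversely such a cut
with `J₂ ⊆ F_i` yields `C_i(t)`. A cut can be truncated at any later point `s ∈ δ_i` of `[t, u]`.

Given a decomposition `I₁ < ⋯ < I_k`, consecutive intervals provide these cuts, so `I_j ⊆ F_j`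
by downward induction on `j`, and any choice of points `a_j ∈ I_j` starting at `a₁` works.
Given `a₁ < ⋯ < a_k`, the condition at `a₁` gives a cut of some `[a₁, s₂]` with `s₂ ∈ F₂`,
truncated so that `s₂ ≤ a₂`, and one continues from `s₂`; gluing `J₂` of each cut to `J₁` of the
next gives the decomposition, which ends at some `b ≤ a_k ≤ d`.
-/

open Set

section LinearOrder

variable {T : Type*} [LinearOrder T]

theorem isConvex_Icc (a b : T) : IsConvex (Icc a b) :=
  fun _ hx _ hy _ hxc hcy => ⟨hx.1.trans hxc, hcy.trans hy.2⟩

theorem isConvex_of_separated {A S : Set T} (hS : IsConvex S) (hAS : A ⊆ S)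
    (h : ∀ c ∈ S, c ∉ A → (∀ x ∈ A, c < x) ∨ ∀ x ∈ A, x < c) : IsConvex A := by
  intro x hx y hy c hxc hcy
  by_contra hc
  rcases h c (hS x (hAS hx) y (hAS hy) c hxc hcy) hc with h | h
  · exact (h x hx).not_ge hxc
  · exact (h y hy).not_ge hcy

section TwoPieces

variable {J₁ J₂ : Set T} {t u : T}

theorem isConvex_left_of_union_eq_Icc (hU : J₁ ∪ J₂ = Icc t u)
    (hord : ∀ x ∈ J₁, ∀ y ∈ J₂, x < y) : IsConvex J₁ :=
  isConvex_of_separated (isConvex_Icc t u) (hU ▸ subset_union_left) fun c hc hc₁ =>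
    Or.inr fun x hx => hord x hx c ((hU ▸ hc : c ∈ J₁ ∪ J₂).resolve_left hc₁)

theorem isConvex_right_of_union_eq_Icc (hU : J₁ ∪ J₂ = Icc t u)
    (hord : ∀ x ∈ J₁, ∀ y ∈ J₂, x < y) : IsConvex J₂ :=
  isConvex_of_separated (isConvex_Icc t u) (hU ▸ subset_union_right) fun c hc hc₂ =>
    Or.inl fun x hx => hord c ((hU ▸ hc : c ∈ J₁ ∪ J₂).resolve_right hc₂) x hx

theorem left_mem_of_union_eq_Icc (hU : J₁ ∪ J₂ = Icc t u)
    (hord : ∀ x ∈ J₁, ∀ y ∈ J₂, x < y) (hne : J₁.Nonempty) : t ∈ J₁ := by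
  obtain ⟨x, hx⟩ := hne
  have hx' : x ∈ Icc t u := hU ▸ mem_union_left J₂ hx
  have ht : t ∈ J₁ ∪ J₂ := hU ▸ left_mem_Icc.2 (hx'.1.trans hx'.2)
  exact ht.resolve_right fun ht₂ => (hord x hx t ht₂).not_ge hx'.1

theorem right_mem_of_union_eq_Icc (hU : J₁ ∪ J₂ = Icc t u)
    (hord : ∀ x ∈ J₁, ∀ y ∈ J₂, x < y) (hne : J₂.Nonempty) : u ∈ J₂ := by
  obtain ⟨x, hx⟩ := hne
  have hx' : x ∈ Icc t u := hU ▸ mem_union_right J₁ hx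
  have hu : u ∈ J₁ ∪ J₂ := hU ▸ right_mem_Icc.2 (hx'.1.trans hx'.2)
  exact hu.resolve_left fun hu₁ => (hord u hu₁ x hx).not_ge hx'.2

end TwoPieces

def SplitsAs (P Q : Set T) (p q : Prop) (t u : T) : Prop :=
  ∃ J₁ J₂ : Set T, J₁ ∪ J₂ = Icc t u ∧ (∀ x ∈ J₁, ∀ y ∈ J₂, x < y) ∧ t ∈ J₁ ∧ u ∈ J₂ ∧
    J₁ ⊆ P ∧ J₂ ⊆ Q ∧ (p → J₁ = {t}) ∧ (q → J₂ = {u})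

namespace SplitsAs

variable {P Q : Set T} {p q : Prop} {t u : T}

theorem mono {P' Q' : Set T} {p' q' : Prop} (h : SplitsAs P Q p q t u) (hP : P ⊆ P')
    (hQ : Q ⊆ Q') (hp : p' → p) (hq : q' → q) : SplitsAs P' Q' p' q' t u := by
  obtain ⟨J₁, J₂, hU, hord, htJ, huJ, hJP, hJQ, hJp, hJq⟩ := h
  exact ⟨J₁, J₂, hU, hord, htJ, huJ, hJP.trans hP, hJQ.trans hQ, hJp ∘ hp, hJq ∘ hq⟩

theorem restrict {s : T} (h : SplitsAs P Q p q t u) (hts : t < s) (hsu : s ≤ u) (hsQ : s ∈ Q) :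
    SplitsAs P Q p q t s := by
  obtain ⟨J₁, J₂, hU, hord, htJ, huJ, hJP, hJQ, hJp, hJq⟩ := h
  refine ⟨J₁ ∩ Iio s, insert s (J₂ ∩ Iic s), ?_, ?_, ⟨htJ, hts⟩, mem_insert s _,
    inter_subset_left.trans hJP, insert_subset hsQ (inter_subset_left.trans hJQ),
    fun hp => by rw [hJp hp]; exact inter_eq_left.2 (singleton_subset_iff.2 hts), fun hq => ?_⟩
  · ext y
    have hJ : y ∈ J₁ ∪ J₂ → t ≤ y := fun hy => (hU ▸ hy : y ∈ Icc t u).1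
    constructor
    · rintro (⟨hy, hys⟩ | rfl | ⟨hy, hys⟩)
      exacts [⟨hJ (.inl hy), hys.le⟩, ⟨hts.le, le_rfl⟩, ⟨hJ (.inr hy), hys⟩]
    · rintro ⟨hty, hys⟩
      rcases hys.lt_or_eq with hys | rfl
      · rcases (hU ▸ ⟨hty, hys.le.trans hsu⟩ : y ∈ J₁ ∪ J₂) with hy | hy
        exacts [.inl ⟨hy, hys⟩, .inr (.inr ⟨hy, hys.le⟩)]
      · exact .inr (mem_insert y _)
  · rintro x ⟨hx, hxs⟩ y (rfl | ⟨hy, -⟩)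
    exacts [hxs, hord x hx y hy]
  · rw [hJq hq]
    ext y
    simp only [mem_insert_iff, mem_inter_iff, mem_singleton_iff, mem_Iic]
    exact ⟨fun h => h.elim id fun ⟨hyu, hys⟩ => le_antisymm hys (hyu ▸ hsu), .inl⟩

end SplitsAs

theorem splitsAs_singleton_left {P Q : Set T} {p q : Prop} {t u : T} (htu : t < u) (ht : t ∈ P)
    (hu : u ∈ Q) (hQ : Ioo t u ⊆ Q) (hq : q → Ioo t u = ∅) : SplitsAs P Q p q t u := by
  refine ⟨{t}, insert u (Ioo t u), ?_, ?_, rfl, mem_insert u _, singleton_subset_iff.2 ht,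
    insert_subset hu hQ, fun _ => rfl, fun hq' => by rw [hq hq', insert_empty_eq]⟩
  · rw [singleton_union, Ioo_insert_right htu, Ioc_insert_left htu.le]
  · rintro x rfl y (rfl | hy)
    exacts [htu, hy.1]

theorem splitsAs_singleton_right {P Q : Set T} {p q : Prop} {t u : T} (htu : t < u) (ht : t ∈ P)
    (hu : u ∈ Q) (hP : Ioo t u ⊆ P) (hp : p → Ioo t u = ∅) : SplitsAs P Q p q t u := by
  refine ⟨insert t (Ioo t u), {u}, ?_, ?_, mem_insert t _, rfl, insert_subset ht hP,
    singleton_subset_iff.2 hu, fun hp' => by rw [hp hp', insert_empty_eq], fun _ => rfl⟩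
  · rw [union_singleton, Ioo_insert_left htu, Ico_insert_right htu.le]
  · rintro x (rfl | hx) y rfl
    exacts [htu, hx.2]

/-- The condition `C_i(t)` of the paper, where `p` and `q` stand for `i-1 ∈ O` and `i ∈ O`,
`P = δ_{i-1}`, `Q = δ_i` and `B = F_i`. -/
def UntilCond (P Q B : Set T) (p q : Prop) [Decidable p] [Decidable q] (t : T) : Prop :=
  if p then (if q then Until ∅ B t else Until Q B t)
  else (if q then Until P B t else UntilStar P B t)

section UntilCond

variable {P Q B : Set T} {p q : Prop} [Decidable p] [Decidable q] {t : T}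

theorem UntilCond.exists_splitsAs (hBQ : B ⊆ Q) (ht : t ∈ P) (h : UntilCond P Q B p q t) :
    ∃ u, t < u ∧ u ∈ B ∧ SplitsAs P Q p q t u := by
  unfold UntilCond at h
  split_ifs at h with hp hq hq
  · obtain ⟨u, htu, huB, hA⟩ := h
    have hIoo : Ioo t u = ∅ := eq_empty_of_forall_notMem fun y hy => hA y hy.1 hy.2
    exact ⟨u, htu, huB, splitsAs_singleton_left htu ht (hBQ huB) (hIoo ▸ empty_subset Q)
      fun _ => hIoo⟩
  · obtain ⟨u, htu, huB, hA⟩ := h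
    exact ⟨u, htu, huB, splitsAs_singleton_left htu ht (hBQ huB) (fun y hy => hA y hy.1 hy.2)
      fun hq' => (hq hq').elim⟩
  · obtain ⟨u, htu, huB, hA⟩ := h
    exact ⟨u, htu, huB, splitsAs_singleton_right htu ht (hBQ huB) (fun y hy => hA y hy.1 hy.2)
      fun hp' => (hp hp').elim⟩
  · obtain ⟨u, htu, J₁, J₂, hne₁, hne₂, -, -, hU, -, hord, hJP, hJB⟩ := h
    have huJ := right_mem_of_union_eq_Icc hU hord hne₂
    exact ⟨u, htu, hJB huJ, J₁, J₂, hU, hord, left_mem_of_union_eq_Icc hU hord hne₁, huJ, hJP,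
      hJB.trans hBQ, fun hp' => (hp hp').elim, fun hq' => (hq hq').elim⟩

theorem untilCond_of_splitsAs {u : T} (hBQ : B ⊆ Q) (hu : u ∈ B) (h : SplitsAs P B p q t u) :
    UntilCond P Q B p q t := by
  obtain ⟨J₁, J₂, hU, hord, htJ, huJ, hJP, hJB, hJp, hJq⟩ := h
  have htu : t < u := hord t htJ u huJ
  have hmid : ∀ y, t < y → y < u → y ∈ J₁ ∪ J₂ := fun y hty hyu => hU ▸ ⟨hty.le, hyu.le⟩
  unfold UntilCond
  split_ifs with hp hq hq
  · rw [hJp hp, hJq hq] at hmid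
    refine ⟨u, htu, hu, fun y hty hyu => ?_⟩
    rcases hmid y hty hyu with rfl | rfl
    exacts [(lt_irrefl y hty).elim, (lt_irrefl y hyu).elim]
  · rw [hJp hp] at hmid
    exact ⟨u, htu, hu, fun y hty hyu => hBQ (hJB ((hmid y hty hyu).resolve_left hty.ne'))⟩
  · rw [hJq hq] at hmid
    exact ⟨u, htu, hu, fun y hty hyu => hJP ((hmid y hty hyu).resolve_right hyu.ne)⟩
  · exact ⟨u, htu, J₁, J₂, ⟨t, htJ⟩, ⟨u, huJ⟩, isConvex_left_of_union_eq_Icc hU hord,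
      isConvex_right_of_union_eq_Icc hU hord, hU,
      disjoint_left.2 fun x hx₁ hx₂ => lt_irrefl x (hord x hx₁ x hx₂), hord, hJP, hJB⟩

end UntilCond

end LinearOrder

theorem mem_cons_update_succ {α : Type*} {n : ℕ} {J₁ J₂ : Set α} {I : Fin (n + 1) → Set α}
    (j : Fin (n + 1)) (y : α) :
    y ∈ (Fin.cons J₁ (Function.update I 0 (J₂ ∪ I 0)) : Fin (n + 2) → Set α) j.succ ↔
      (j = 0 ∧ y ∈ J₂) ∨ y ∈ I j := by
  rcases eq_or_ne j 0 with rfl | hj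
  · simp
  · simp only [Fin.cons_succ, Function.update_of_ne hj, hj, false_and, false_or]

namespace IsDecomp

variable {T : Type*} [LinearOrder T] {a b : T}

theorem subset_Icc {k : ℕ} {I : Fin k → Set T} (hI : IsDecomp a b I) (j : Fin k) :
    I j ⊆ Icc a b :=
  hI.2.2.2 ▸ subset_iUnion I j

theorem exists_mem {k : ℕ} {I : Fin k → Set T} (hI : IsDecomp a b I) {x : T}
    (hx : x ∈ Icc a b) : ∃ j, x ∈ I j :=
  mem_iUnion.1 (hI.2.2.2 ▸ hx)

theorem of_ordered {k : ℕ} {I : Fin k → Set T} (hne : ∀ j, (I j).Nonempty)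
    (hord : ∀ i j : Fin k, i < j → ∀ x ∈ I i, ∀ y ∈ I j, x < y) (hU : ⋃ j, I j = Icc a b) :
    IsDecomp a b I := by
  refine ⟨hne, fun j => isConvex_of_separated (isConvex_Icc a b) (hU ▸ subset_iUnion I j) ?_,
    hord, hU⟩
  intro c hc hcj
  obtain ⟨i, hci⟩ := mem_iUnion.1 (hU ▸ hc)
  rcases lt_or_gt_of_ne (fun h => hcj (h ▸ hci) : i ≠ j) with hij | hji
  · exact .inl fun x hx => hord i j hij c hci x hx
  · exact .inr fun x hx => hord j i hji x hx c hci

variable {n : ℕ} {I : Fin (n + 1) → Set T}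

theorem left_mem (hI : IsDecomp a b I) : a ∈ I 0 := by
  obtain ⟨x, hx⟩ := hI.1 0
  have hxab := hI.subset_Icc 0 hx
  obtain ⟨j, haj⟩ := hI.exists_mem (left_mem_Icc.2 (hxab.1.trans hxab.2))
  rcases (Fin.zero_le j).eq_or_lt with rfl | hj
  · exact haj
  · exact ((hI.2.2.1 0 j hj x hx a haj).not_ge hxab.1).elim

theorem le (hI : IsDecomp a b I) : a ≤ b :=
  (hI.subset_Icc 0 hI.left_mem).2

theorem mem_union_of_mem_Icc (hI : IsDecomp a b I) (i : Fin n) {t u y : T}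
    (ht : t ∈ I i.castSucc) (hu : u ∈ I i.succ) (hy : y ∈ Icc t u) :
    y ∈ I i.castSucc ∪ I i.succ := by
  obtain ⟨j, hyj⟩ :=
    hI.exists_mem ⟨(hI.subset_Icc _ ht).1.trans hy.1, hy.2.trans (hI.subset_Icc _ hu).2⟩
  rcases lt_trichotomy j i.castSucc with hj | rfl | hj
  · exact ((hI.2.2.1 _ _ hj y hyj t ht).not_ge hy.1).elim
  · exact .inl hyj
  · rcases (Fin.castSucc_lt_iff_succ_le.1 hj).eq_or_lt with rfl | hj
    · exact .inr hyj
    · exact ((hI.2.2.1 _ _ hj u hu y hyj).not_ge hy.2).elim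

theorem splitsAs (hI : IsDecomp a b I) (i : Fin n) {t u : T} (ht : t ∈ I i.castSucc)
    (hu : u ∈ I i.succ) :
    SplitsAs (I i.castSucc) (I i.succ) (∃ x, I i.castSucc = {x}) (∃ x, I i.succ = {x}) t u := by
  have hord := hI.2.2.1 _ _ (Fin.castSucc_lt_succ (i := i))
  have htu := hord t ht u hu
  refine ⟨I i.castSucc ∩ Icc t u, I i.succ ∩ Icc t u, ?_, fun x hx y hy => hord x hx.1 y hy.1,
    ⟨ht, left_mem_Icc.2 htu.le⟩, ⟨hu, right_mem_Icc.2 htu.le⟩, inter_subset_left,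
    inter_subset_left, ?_, ?_⟩
  · rw [← union_inter_distrib_right]
    exact inter_eq_right.2 fun y hy => hI.mem_union_of_mem_Icc i ht hu hy
  · rintro ⟨x, hx⟩
    obtain rfl : t = x := by rw [hx] at ht; exact ht
    rw [hx]
    exact inter_eq_left.2 (singleton_subset_iff.2 (left_mem_Icc.2 htu.le))
  · rintro ⟨x, hx⟩
    obtain rfl : u = x := by rw [hx] at hu; exact hu
    rw [hx]
    exact inter_eq_left.2 (singleton_subset_iff.2 (right_mem_Icc.2 htu.le))

theorem exists_strictMono (hI : IsDecomp a b I) :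
    ∃ x : Fin (n + 1) → T, StrictMono x ∧ x 0 = a ∧ ∀ j, x j ∈ I j := by
  choose y hy using hI.1
  have hmem : ∀ j, (Fin.cons a (fun j => y j.succ) : Fin (n + 1) → T) j ∈ I j :=
    Fin.cases hI.left_mem fun j => hy j.succ
  exact ⟨_, fun i j hij => hI.2.2.1 i j hij _ (hmem i) _ (hmem j), rfl, hmem⟩

theorem cons {s : T} {J₁ J₂ : Set T} (hU : J₁ ∪ J₂ = Icc a s)
    (hord : ∀ x ∈ J₁, ∀ y ∈ J₂, x < y) (haJ : a ∈ J₁) (hsJ : s ∈ J₂) (hI : IsDecomp s b I) :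
    IsDecomp a b (Fin.cons J₁ (Function.update I 0 (J₂ ∪ I 0))) := by
  have hG := mem_cons_update_succ (J₁ := J₁) (J₂ := J₂) (I := I)
  have hsI := hI.left_mem
  have hJ : ∀ y ∈ J₁ ∪ J₂, y ∈ Icc a s := fun y hy => hU ▸ hy
  have hIs : ∀ j, ∀ y ∈ I j, y ∈ Icc s b := hI.subset_Icc
  refine of_ordered (fun j => ?_) (fun p q hpq x hx y hy => ?_) ?_
  · cases j using Fin.cases with
    | zero => exact ⟨a, haJ⟩
    | succ j => exact (hI.1 j).imp fun y hy => (hG j y).2 (.inr hy)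
  · cases q using Fin.cases with
    | zero => exact absurd hpq (Fin.not_lt_zero p)
    | succ j =>
      cases p using Fin.cases with
      | zero =>
        rcases (hG j y).1 hy with ⟨-, hy⟩ | hy
        exacts [hord x hx y hy, (hord x hx s hsJ).trans_le (hIs j y hy).1]
      | succ i =>
        have hij : i < j := Fin.succ_lt_succ_iff.1 hpq
        have hy : y ∈ I j := ((hG j y).1 hy).resolve_left fun h => Fin.not_lt_zero i (h.1 ▸ hij)
        rcases (hG i x).1 hx with ⟨-, hx⟩ | hx
        · exact (hJ x (.inr hx)).2.trans_lt (hI.2.2.1 0 j (i.zero_le.trans_lt hij) s hsI y hy)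
        · exact hI.2.2.1 i j hij x hx y hy
  · ext y
    simp only [mem_iUnion]
    constructor
    · rintro ⟨j, hj⟩
      cases j using Fin.cases with
      | zero => exact Icc_subset_Icc_right (hIs 0 s hsI).2 (hJ y (.inl hj))
      | succ j =>
        rcases (hG j y).1 hj with ⟨-, hy⟩ | hy
        exacts [Icc_subset_Icc_right (hIs 0 s hsI).2 (hJ y (.inr hy)),
          Icc_subset_Icc_left (hJ s (.inr hsJ)).1 (hIs j y hy)]
    · intro hy
      rcases le_total y s with hys | hsy
      · rcases (hU ▸ ⟨hy.1, hys⟩ : y ∈ J₁ ∪ J₂) with hy | hy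
        exacts [⟨0, hy⟩, ⟨Fin.succ 0, (hG 0 y).2 (.inl ⟨rfl, hy⟩)⟩]
      · obtain ⟨j, hj⟩ := hI.exists_mem ⟨hsy, hy.2⟩
        exact ⟨j.succ, (hG j y).2 (.inr hj)⟩

end IsDecomp

namespace DefinesF

variable {T : Type*} [LinearOrder T] {n : ℕ}

theorem eq_inter {δ F : Fin (n + 1) → Set T} {O : Finset (Fin (n + 1))} (hF : DefinesF δ F O)
    (i : Fin n) :
    F i.castSucc = δ i.castSucc ∩
      {t | UntilCond (δ i.castSucc) (δ i.succ) (F i.succ) (i.castSucc ∈ O) (i.succ ∈ O) t} :=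
  hF.2 i

theorem subset {δ F : Fin (n + 1) → Set T} {O : Finset (Fin (n + 1))} (hF : DefinesF δ F O)
    (j : Fin (n + 1)) : F j ⊆ δ j := by
  cases j using Fin.lastCases with
  | last => exact hF.1.subset
  | cast i => exact (hF.eq_inter i).trans_subset inter_subset_left

theorem tail {δ F : Fin (n + 2) → Set T} {O : Finset (Fin (n + 2))} (hF : DefinesF δ F O) :
    DefinesF (Fin.tail δ) (Fin.tail F) (O.preimage Fin.succ (Fin.succ_injective _).injOn) := by
  refine ⟨hF.1, fun i => ?_⟩
  have h := hF.eq_inter i.succ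
  rw [← Fin.succ_castSucc] at h
  simp only [Fin.tail, h, UntilCond, Finset.mem_preimage]

theorem exists_splitsAs {δ F : Fin (n + 1) → Set T} {O : Finset (Fin (n + 1))}
    (hF : DefinesF δ F O) (i : Fin n) {t s : T} (ht : t ∈ F i.castSucc) (hs : s ∈ F i.succ)
    (hts : t < s) :
    ∃ s' ≤ s, t < s' ∧ s' ∈ F i.succ ∧
      SplitsAs (δ i.castSucc) (δ i.succ) (i.castSucc ∈ O) (i.succ ∈ O) t s' := by
  rw [hF.eq_inter i] at ht
  obtain ⟨u, htu, huF, hsplit⟩ := ht.2.exists_splitsAs (hF.subset i.succ) ht.1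
  have hmin : min u s ∈ F i.succ := by rcases min_choice u s with h | h <;> rw [h] <;> assumption
  exact ⟨min u s, min_le_right u s, lt_min htu hts, hmin,
    hsplit.restrict (lt_min htu hts) (min_le_left u s) (hF.subset i.succ hmin)⟩

theorem exists_isDecomp {δ F : Fin (n + 1) → Set T} {O : Finset (Fin (n + 1))}
    (hF : DefinesF δ F O) {a : Fin (n + 1) → T} (ha : StrictMono a) (haF : ∀ i, a i ∈ F i)
    {t : T} (ht : t ∈ F 0) (hta : t ≤ a 0) :
    ∃ b ≤ a (Fin.last n), ∃ I : Fin (n + 1) → Set T,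
      IsDecomp t b I ∧ (∀ j, I j ⊆ δ j) ∧ ∀ j ∈ O, ∃ x, I j = {x} := by
  induction n generalizing t with
  | zero =>
    refine ⟨t, hta, fun _ => {t}, IsDecomp.of_ordered (fun _ => singleton_nonempty t)
      (fun i j hij => absurd hij (Subsingleton.elim (α := Fin 1) i j).not_lt) (by simp),
      fun j => ?_, fun _ _ => ⟨t, rfl⟩⟩
    rw [Subsingleton.elim (α := Fin 1) j (Fin.last 0), ← hF.1, singleton_subset_iff]
    exact ht
  | succ n ih =>
    obtain ⟨s, hsa, hts, hsF, J₁, J₂, hU, hord, htJ, hsJ, hJδ₁, hJδ₂, hJO₁, hJO₂⟩ :=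
      hF.exists_splitsAs 0 ht (haF (Fin.succ 0)) (hta.trans_lt (ha (Fin.succ_pos 0)))
    obtain ⟨b, hb, I, hI, hIδ, hIO⟩ :=
      ih hF.tail (ha.comp Fin.strictMono_succ) (fun i => haF i.succ) hsF hsa
    refine ⟨b, hb, _, hI.cons hU hord htJ hsJ, fun j => ?_, fun j hj => ?_⟩
    · cases j using Fin.cases with
      | zero => exact hJδ₁
      | succ j =>
        rcases eq_or_ne j 0 with rfl | hj
        · simpa using union_subset hJδ₂ (hIδ 0)
        · simpa [Function.update_of_ne hj, Fin.tail] using hIδ j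
    · cases j using Fin.cases with
      | zero => exact ⟨t, hJO₁ hj⟩
      | succ j =>
        obtain ⟨x, hx⟩ := hIO j (Finset.mem_preimage.2 hj)
        rcases eq_or_ne j 0 with rfl | hj0
        · obtain rfl : s = x := by simpa [hx] using hI.left_mem
          exact ⟨s, by simp [hJO₂ hj, hx]⟩
        · exact ⟨x, by simpa [Function.update_of_ne hj0] using hx⟩

theorem subset_of_isDecomp {δ F : Fin (n + 1) → Set T} {O : Finset (Fin (n + 1))}
    (hF : DefinesF δ F O) {a b : T} {I : Fin (n + 1) → Set T} (hI : IsDecomp a b I)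
    (hIδ : ∀ j, I j ⊆ δ j) (hIO : ∀ j ∈ O, ∃ x, I j = {x}) (j : Fin (n + 1)) : I j ⊆ F j := by
  induction j using Fin.reverseInduction with
  | last => exact hF.1 ▸ hIδ _
  | cast i ih =>
    intro t ht
    obtain ⟨u, hu⟩ := hI.1 i.succ
    rw [hF.eq_inter i]
    exact ⟨hIδ _ ht, untilCond_of_splitsAs (hF.subset _) (ih hu)
      ((hI.splitsAs i ht hu).mono (hIδ _) ih (hIO _) (hIO _))⟩

end DefinesF

theorem stmt_15_general {T : Type*} [LinearOrder T] {n : ℕ}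
    (δ F : Fin (n + 1) → Set T) (O : Finset (Fin (n + 1)))
    (hF : DefinesF δ F O) (a₁ d : T) :
    (∃ a : Fin (n + 1) → T, StrictMono a ∧ a 0 = a₁ ∧ a (Fin.last n) ≤ d ∧
      ∀ i, a i ∈ F i) ↔
    (∃ b, a₁ ≤ b ∧ b ≤ d ∧ ∃ I : Fin (n + 1) → Set T,
      IsDecomp a₁ b I ∧ (∀ j, I j ⊆ δ j) ∧ (∀ j ∈ O, ∃ x, I j = {x})) := by
  constructor
  · rintro ⟨a, ha, rfl, had, haF⟩
    obtain ⟨b, hba, I, hI, hIδ, hIO⟩ := hF.exists_isDecomp ha haF (haF 0) le_rfl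
    exact ⟨b, hI.le, hba.trans had, I, hI, hIδ, hIO⟩
  · rintro ⟨b, -, hbd, I, hI, hIδ, hIO⟩
    obtain ⟨a, ha, ha₀, haI⟩ := hI.exists_strictMono
    exact ⟨a, ha, ha₀, (hI.subset_Icc _ (haI _)).2.trans hbd,
      fun j => hF.subset_of_isDecomp hI hIδ hIO j (haI j)⟩

theorem stmt_15 {T : Type*} [LinearOrder T] {n : ℕ}
    (δ F : Fin (n + 1) → Set T) (O : Finset (Fin (n + 1)))
    (hF : DefinesF δ F O) (a₁ d : T) (had : a₁ ≤ d) :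
    (∃ a : Fin (n + 1) → T, StrictMono a ∧ a 0 = a₁ ∧ a (Fin.last n) ≤ d ∧
      ∀ i, a i ∈ F i) ↔
    (∃ b, a₁ ≤ b ∧ b ≤ d ∧ ∃ I : Fin (n + 1) → Set T,
      IsDecomp a₁ b I ∧ (∀ j, I j ⊆ δ j) ∧ (∀ j ∈ O, ∃ x, I j = {x})) :=
  stmt_15_general δ F O hF a₁ d
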